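/- Let n ≥ 1 and define A : ℝⁿ → ℝⁿ by A(ξ) = a(|ξ|)·ξ for ξ ≠ 0 and A(0) = 0. Then for every τ > 0 and every t with 0 < t ≤ 2τ, there exists θ > 0 such that (A(ξ) − A(η)) · (ξ − η) ≥ θ for all ξ, η ∈ ℝⁿ with |ξ − η| ≥ t, |ξ| ≤ τ and |η| ≤ τ; equivalently, the infimum of (A(ξ) − A(η)) · (ξ − η) over this set is strictly positive. -/

import Mathlib

/-!
Write `r = ‖ξ‖ ≥ s = ‖η‖` and `g(x) = a(x) x`. Then
`⟪A ξ - A η, ξ - η⟫ = (g r - g s)(r - s) + (a r + a s)(r s - ⟪ξ, η⟫)`, and both terms are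
nonnegative: the first because `g' = a + x a' ≥ (1 + i_a) a > 0`, the second by Cauchy–Schwarz.
Since `‖ξ - η‖² = (r - s)² + 2 (r s - ⟪ξ, η⟫) ≥ t²`, either the angular defect `r s - ⟪ξ, η⟫` is
at least `t²/4`, or `r - s ≥ t/2`. As `r ≥ t/2` in both cases, everything happens where `a` is
bounded below by its (positive) minimum `c` on `[t/4, τ]`, which gives a uniform bound in either
case.
-/

open Set

section RadialProfile

variable {a a' : ℝ → ℝ} {iA : ℝ}

lemma mul_sub_le_mul_id_sub (hiA : -1 ≤ iA) (ha_pos : ∀ x, 0 < x → 0 < a x)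
    (ha_deriv : ∀ x, 0 < x → HasDerivAt a (a' x) x)
    (hlow : ∀ x, 0 < x → iA ≤ x * a' x / a x) {u v c : ℝ} (hu : 0 < u) (huv : u ≤ v)
    (hc : ∀ x ∈ Icc u v, c ≤ a x) :
    (1 + iA) * c * (v - u) ≤ a v * v - a u * u := by
  have hderiv : ∀ x ∈ Icc u v, HasDerivAt (fun y => a y * y) (a' x * x + a x * 1) x :=
    fun x hx => (ha_deriv x (hu.trans_le hx.1)).mul (hasDerivAt_id x)
  refine (convex_Icc u v).mul_sub_le_image_sub_of_le_deriv
    (fun x hx => (hderiv x hx).continuousAt.continuousWithinAt)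
    (fun x hx => (hderiv x (interior_subset hx)).differentiableAt.differentiableWithinAt)
    (fun x hx => ?_) u (left_mem_Icc.2 huv) v (right_mem_Icc.2 huv) huv
  rw [interior_Icc] at hx
  have hx0 : 0 < x := hu.trans hx.1
  rw [(hderiv x (Ioo_subset_Icc_self hx)).deriv]
  have hindex : iA * a x ≤ x * a' x := (le_div_iff₀ (ha_pos x hx0)).1 (hlow x hx0)
  nlinarith [hc x (Ioo_subset_Icc_self hx)]

lemma monotoneOn_mul_id (hiA : -1 ≤ iA) (ha_pos : ∀ x, 0 < x → 0 < a x)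
    (ha_deriv : ∀ x, 0 < x → HasDerivAt a (a' x) x)
    (hlow : ∀ x, 0 < x → iA ≤ x * a' x / a x) :
    MonotoneOn (fun x => a x * x) (Ici 0) := by
  intro u hu v hv huv
  rcases (mem_Ici.1 hu).eq_or_lt with rfl | hu
  · rcases (mem_Ici.1 hv).eq_or_lt with rfl | hv
    · rfl
    · simpa using mul_nonneg (ha_pos v hv).le hv.le
  · simpa using mul_sub_le_mul_id_sub hiA ha_pos ha_deriv hlow hu huv
      (fun x hx => (ha_pos x (hu.trans_le hx.1)).le)

lemma mul_le_mul_id_sub_mul_sub (hiA : -1 ≤ iA) (ha_pos : ∀ x, 0 < x → 0 < a x)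
    (ha_deriv : ∀ x, 0 < x → HasDerivAt a (a' x) x)
    (hlow : ∀ x, 0 < x → iA ≤ x * a' x / a x) {t τ c r s : ℝ} (ht : 0 < t)
    (hc : ∀ x ∈ Icc (t / 4) τ, c ≤ a x) (hs : 0 ≤ s) (hsr : s + t / 2 ≤ r) (hr : r ≤ τ) :
    (1 + iA) * c * (t / 4) * (t / 2) ≤ (a r * r - a s * s) * (r - s) := by
  have hmono := monotoneOn_mul_id hiA ha_pos ha_deriv hlow
  -- `s ≤ r - t/2 ≤ r - t/4` while `[r - t/4, r] ⊆ [t/4, τ]`, where `a ≥ c`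
  have hgap : (1 + iA) * c * (t / 4) ≤ a r * r - a s * s := by
    have hstep := mul_sub_le_mul_id_sub hiA ha_pos ha_deriv hlow (u := r - t / 4) (v := r)
      (by linarith) (by linarith) (fun x hx => hc x ⟨by linarith [hx.1], hx.2.trans hr⟩)
    have hs_le : a s * s ≤ a (r - t / 4) * (r - t / 4) :=
      hmono hs (show (0 : ℝ) ≤ r - t / 4 by linarith) (by linarith)
    rw [sub_sub_cancel] at hstep
    linarith
  have hg_nonneg : 0 ≤ a r * r - a s * s :=
    sub_nonneg.2 (hmono hs (show (0 : ℝ) ≤ r by linarith) (by linarith))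
  calc (1 + iA) * c * (t / 4) * (t / 2) ≤ (a r * r - a s * s) * (t / 2) := by gcongr
    _ ≤ (a r * r - a s * s) * (r - s) := by gcongr; linarith

end RadialProfile

section RadialField

variable {E : Type*} [NormedAddCommGroup E] [InnerProductSpace ℝ E]

lemma inner_smul_norm_sub_smul_norm (φ : ℝ → ℝ) (ξ η : E) :
    inner ℝ (φ ‖ξ‖ • ξ - φ ‖η‖ • η) (ξ - η) =
      (φ ‖ξ‖ * ‖ξ‖ - φ ‖η‖ * ‖η‖) * (‖ξ‖ - ‖η‖) +
        (φ ‖ξ‖ + φ ‖η‖) * (‖ξ‖ * ‖η‖ - inner ℝ ξ η) := by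
  simp only [inner_sub_left, inner_sub_right, real_inner_smul_left, real_inner_self_eq_norm_sq,
    real_inner_comm ξ η]
  ring

variable {a a' : ℝ → ℝ} {iA : ℝ}

lemma le_inner_smul_norm_sub_smul_norm_of_norm_le (hiA : -1 ≤ iA)
    (ha_pos : ∀ x, 0 < x → 0 < a x) (ha_deriv : ∀ x, 0 < x → HasDerivAt a (a' x) x)
    (hlow : ∀ x, 0 < x → iA ≤ x * a' x / a x) {t τ c : ℝ} (ht : 0 < t)
    (hc : ∀ x ∈ Icc (t / 4) τ, c ≤ a x) {ξ η : E} (hle : ‖η‖ ≤ ‖ξ‖) (hdist : t ≤ ‖ξ - η‖)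
    (hξ : ‖ξ‖ ≤ τ) :
    min ((1 + iA) * c * (t / 4) * (t / 2)) (c * (t ^ 2 / 4)) ≤
      inner ℝ (a ‖ξ‖ • ξ - a ‖η‖ • η) (ξ - η) := by
  rw [inner_smul_norm_sub_smul_norm]
  have hr : t / 2 ≤ ‖ξ‖ := by linarith [norm_sub_le ξ η]
  have hcs : inner ℝ ξ η ≤ ‖ξ‖ * ‖η‖ := real_inner_le_norm ξ η
  have hsq : t ^ 2 ≤ (‖ξ‖ - ‖η‖) ^ 2 + 2 * (‖ξ‖ * ‖η‖ - inner ℝ ξ η) := by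
    nlinarith [norm_sub_sq_real ξ η, pow_le_pow_left₀ ht.le hdist 2]
  have ha_r : c ≤ a ‖ξ‖ := hc _ ⟨by linarith, hξ⟩
  have ha_r_pos : 0 < a ‖ξ‖ := ha_pos _ (by linarith)
  have hg_nonneg : 0 ≤ (a ‖ξ‖ * ‖ξ‖ - a ‖η‖ * ‖η‖) * (‖ξ‖ - ‖η‖) :=
    mul_nonneg (sub_nonneg.2 (monotoneOn_mul_id hiA ha_pos ha_deriv hlow (norm_nonneg η)
      (norm_nonneg ξ) hle)) (sub_nonneg.2 hle)
  rcases le_or_gt (t ^ 2 / 4) (‖ξ‖ * ‖η‖ - inner ℝ ξ η) with hangle | hangle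
  · have hη : 0 < ‖η‖ := by
      refine (norm_nonneg η).lt_of_ne fun h => ?_
      rw [eq_comm, norm_eq_zero] at h
      subst h
      simp only [norm_zero, mul_zero, inner_zero_right, sub_zero] at hangle
      nlinarith
    have hdefect : c * (t ^ 2 / 4) ≤ (a ‖ξ‖ + a ‖η‖) * (‖ξ‖ * ‖η‖ - inner ℝ ξ η) := by
      nlinarith [ha_pos _ hη]
    exact (min_le_right _ _).trans (by linarith)
  · have hradial : t / 2 ≤ ‖ξ‖ - ‖η‖ := by nlinarith
    have hdefect : 0 ≤ (a ‖ξ‖ + a ‖η‖) * (‖ξ‖ * ‖η‖ - inner ℝ ξ η) := by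
      rcases (norm_nonneg η).eq_or_lt with h | hη
      · rw [eq_comm, norm_eq_zero] at h
        simp [h]
      · exact mul_nonneg (by linarith [ha_pos _ hη]) (sub_nonneg.2 hcs)
    have := mul_le_mul_id_sub_mul_sub hiA ha_pos ha_deriv hlow ht hc (norm_nonneg η)
      (by linarith) hξ
    exact (min_le_left _ _).trans (by linarith)

lemma exists_pos_le_inner_smul_norm_sub_smul_norm (hiA : -1 < iA)
    (ha_pos : ∀ x, 0 < x → 0 < a x) (ha_deriv : ∀ x, 0 < x → HasDerivAt a (a' x) x)
    (hlow : ∀ x, 0 < x → iA ≤ x * a' x / a x) {τ t : ℝ} (ht : 0 < t) :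
    ∃ θ : ℝ, 0 < θ ∧ ∀ ξ η : E, t ≤ ‖ξ - η‖ → ‖ξ‖ ≤ τ → ‖η‖ ≤ τ →
      θ ≤ inner ℝ (a ‖ξ‖ • ξ - a ‖η‖ • η) (ξ - η) := by
  obtain ⟨c, hc, hca⟩ := isCompact_Icc.exists_forall_le'
    (fun x hx => (ha_deriv x (by linarith [hx.1])).continuousAt.continuousWithinAt)
    (fun x hx => ha_pos x (by linarith [hx.1]) : ∀ x ∈ Icc (t / 4) τ, 0 < a x)
  have hiA' : 0 < 1 + iA := by linarith
  refine ⟨min ((1 + iA) * c * (t / 4) * (t / 2)) (c * (t ^ 2 / 4)),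
    lt_min (by positivity) (by positivity), fun ξ η hdist hξ hη => ?_⟩
  rcases le_total ‖η‖ ‖ξ‖ with hle | hle
  · exact le_inner_smul_norm_sub_smul_norm_of_norm_le hiA.le ha_pos ha_deriv hlow ht hca hle
      hdist hξ
  · rw [← inner_neg_neg, neg_sub, neg_sub]
    exact le_inner_smul_norm_sub_smul_norm_of_norm_le hiA.le ha_pos ha_deriv hlow ht hca hle
      (by rwa [norm_sub_rev]) hη

end RadialField

theorem stmt_12_general (a a' : ℝ → ℝ) (iA sA : ℝ)
    (hiA : -1 < iA)
    (ha_pos : ∀ t, 0 < t → 0 < a t)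
    (ha_deriv : ∀ t, 0 < t → HasDerivAt a (a' t) t)
    (hbound : ∀ t, 0 < t → iA ≤ t * a' t / a t ∧ t * a' t / a t ≤ sA)
    (n : ℕ)
    (A : EuclideanSpace ℝ (Fin n) → EuclideanSpace ℝ (Fin n))
    (hA0 : A 0 = 0)
    (hA : ∀ ξ : EuclideanSpace ℝ (Fin n), ξ ≠ 0 → A ξ = a ‖ξ‖ • ξ) :
    ∀ τ : ℝ, 0 < τ → ∀ t : ℝ, 0 < t → t ≤ 2 * τ →
      ∃ θ : ℝ, 0 < θ ∧
        ∀ ξ η : EuclideanSpace ℝ (Fin n),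
          t ≤ ‖ξ - η‖ → ‖ξ‖ ≤ τ → ‖η‖ ≤ τ →
            θ ≤ inner ℝ (A ξ - A η) (ξ - η) := by
  intro τ _ t ht _
  have hA_eq : A = fun ξ => a ‖ξ‖ • ξ := by
    funext ξ
    rcases eq_or_ne ξ 0 with rfl | hξ
    · simp [hA0]
    · exact hA ξ hξ
  subst hA_eq
  exact exists_pos_le_inner_smul_norm_sub_smul_norm hiA ha_pos ha_deriv
    (fun x hx => (hbound x hx).1) ht

/-- positive-infimum claim in Step 3 of the proof of Theorem 1.1.
For the vector field `A(ξ) = a(|ξ|)ξ` (with `A(0)=0`), for every `τ > 0` and `0 < t ≤ 2τ`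
there exists `θ > 0` such that `(A(ξ)−A(η))·(ξ−η) ≥ θ` whenever `|ξ−η| ≥ t`, `|ξ| ≤ τ`,
`|η| ≤ τ`. -/
theorem stmt_12 (a a' : ℝ → ℝ) (iA sA : ℝ)
    (hiA : -1 < iA) (hias : iA ≤ sA)
    (ha_pos : ∀ t, 0 < t → 0 < a t)
    (ha_deriv : ∀ t, 0 < t → HasDerivAt a (a' t) t)
    (ha'_cont : ContinuousOn a' (Set.Ioi 0))
    (hbound : ∀ t, 0 < t → iA ≤ t * a' t / a t ∧ t * a' t / a t ≤ sA)
    (n : ℕ) (hn : 1 ≤ n)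
    (A : EuclideanSpace ℝ (Fin n) → EuclideanSpace ℝ (Fin n))
    (hA0 : A 0 = 0)
    (hA : ∀ ξ : EuclideanSpace ℝ (Fin n), ξ ≠ 0 → A ξ = a ‖ξ‖ • ξ) :
    ∀ τ : ℝ, 0 < τ → ∀ t : ℝ, 0 < t → t ≤ 2 * τ →
      ∃ θ : ℝ, 0 < θ ∧
        ∀ ξ η : EuclideanSpace ℝ (Fin n),
          t ≤ ‖ξ - η‖ → ‖ξ‖ ≤ τ → ‖η‖ ≤ τ →
            θ ≤ inner ℝ (A ξ - A η) (ξ - η) :=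
  stmt_12_general a a' iA sA hiA ha_pos ha_deriv hbound n A hA0 hA
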